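/- In a Euclidean Jordan algebra, let x and y be elements of the cone of squares K = {z∘z : z}. Then x∘y = 0 if and only if ⟨x, y⟩ = 0. -/

import Mathlib

/-!
`⟪x, y⟫ = ⟪x ∘ e, y⟫ = ⟪e, x ∘ y⟫` gives one direction. For the other, the point is that `L(x)` is
positive semidefinite for every square `x = u²`. Power associativity makes `p ↦ p(u)`
multiplicative, so the Lagrange polynomials `ℓ_μ` on the eigenvalues of the symmetric operator
`L(u)` give idempotents `c_μ = ℓ_μ(u)` with `u² = ∑ μ² c_μ`; and `L(c)` is positive for an
idempotent `c`. A positive operator kills every `v` with `⟪L(x) v, v⟫ = 0`. For `y = v²` this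
gives first `x ∘ v = 0` (as `⟪x ∘ v, v⟫ = ⟪x, y⟫`) and then, by the Jordan identity,
`⟪x ∘ y, y⟫ = ⟪x ∘ v, y ∘ v⟫ = 0`, hence `x ∘ y = 0`.
-/

/-- A Euclidean Jordan algebra structure on a finite-dimensional real inner product
space `E`: a commutative bilinear product satisfying the Jordan identity, compatible with
the inner product, and possessing an identity element. -/
structure EuclideanJordanAlgebra (E : Type*) [NormedAddCommGroup E]
    [InnerProductSpace ℝ E] [FiniteDimensional ℝ E] where
  /-- the Jordan product -/
  mul : E → E → E
  mul_comm : ∀ x y, mul x y = mul y x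
  mul_add : ∀ x y z, mul x (y + z) = mul x y + mul x z
  mul_smul : ∀ (c : ℝ) (x y : E), mul x (c • y) = c • mul x y
  jordan : ∀ x y, mul x (mul (mul x x) y) = mul (mul x x) (mul x y)
  inner_assoc : ∀ x y z, (inner ℝ (mul x y) z : ℝ) = inner ℝ y (mul x z)
  one : E
  one_mul : ∀ x, mul one x = x

/-- The cone of squares of a Euclidean Jordan algebra. -/
def EuclideanJordanAlgebra.coneOfSquares {E : Type*} [NormedAddCommGroup E]
    [InnerProductSpace ℝ E] [FiniteDimensional ℝ E] (J : EuclideanJordanAlgebra E) : Set E :=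
  {x | ∃ z : E, x = J.mul z z}

/-- An idempotent of a Euclidean Jordan algebra. -/
def EuclideanJordanAlgebra.IsIdempotent {E : Type*} [NormedAddCommGroup E]
    [InnerProductSpace ℝ E] [FiniteDimensional ℝ E] (J : EuclideanJordanAlgebra E)
    (c : E) : Prop :=
  J.mul c c = c

/-- A primitive idempotent: a nonzero idempotent which is not the sum of two nonzero
orthogonal idempotents. -/
def EuclideanJordanAlgebra.IsPrimitiveIdempotent {E : Type*} [NormedAddCommGroup E]
    [InnerProductSpace ℝ E] [FiniteDimensional ℝ E] (J : EuclideanJordanAlgebra E)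
    (c : E) : Prop :=
  J.IsIdempotent c ∧ c ≠ 0 ∧
    ¬∃ a b : E, a ≠ 0 ∧ b ≠ 0 ∧ J.IsIdempotent a ∧ J.IsIdempotent b ∧
      J.mul a b = 0 ∧ c = a + b

open Polynomial
open scoped InnerProductSpace

theorem LinearMap.IsPositive.apply_eq_zero_of_inner_eq_zero {E : Type*} [NormedAddCommGroup E]
    [InnerProductSpace ℝ E] {T : E →ₗ[ℝ] E} (hT : T.IsPositive) {v : E}
    (hv : ⟪T v, v⟫_ℝ = 0) : T v = 0 := by
  -- `t ↦ ⟪T (v - t • T v), v - t • T v⟫` is a nonnegative quadratic without constant term.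
  have hquad : ∀ t : ℝ, 0 ≤ ⟪T (T v), T v⟫_ℝ * (t * t) + (-2 * ⟪T v, T v⟫_ℝ) * t + 0 := by
    intro t
    have h := hT.inner_nonneg_left (v - t • T v)
    simp only [map_sub, map_smul, inner_sub_left, inner_sub_right, real_inner_smul_left,
      real_inner_smul_right, hv, hT.isSymmetric (T v) v] at h
    linarith
  have hdisc := discrim_le_zero hquad
  rw [discrim] at hdisc
  have : ⟪T v, T v⟫_ℝ = 0 := by nlinarith
  exact inner_self_eq_zero.mp this

theorem LinearMap.IsSymmetric.aeval_eq_zero_of_eval_eigenvalues {E : Type*}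
    [NormedAddCommGroup E] [InnerProductSpace ℝ E] [FiniteDimensional ℝ E] {T : E →ₗ[ℝ] E}
    (hT : T.IsSymmetric) {p : ℝ[X]} (hp : ∀ i, p.eval (hT.eigenvalues rfl i) = 0) :
    aeval T p = 0 :=
  (hT.eigenvectorBasis rfl).toBasis.ext fun i => by
    rw [OrthonormalBasis.coe_toBasis, Module.End.aeval_apply_of_hasEigenvector
      (hT.hasEigenvector_eigenvectorBasis rfl i), RCLike.ofReal_real_eq_id, id_eq, hp i,
      zero_smul, LinearMap.zero_apply]

/-- On the roots `0, 1/2, 1` of `2t³ - 3t² + t` we have `t = t² + 4 (t - t²)²`, whence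
`⟪T w, w⟫ = ‖T w‖² + 4 ‖T w - T² w‖²`. -/
theorem LinearMap.IsSymmetric.isPositive_of_two_smul_cube {E : Type*} [NormedAddCommGroup E]
    [InnerProductSpace ℝ E] {T : E →ₗ[ℝ] E} (hT : T.IsSymmetric)
    (h : ∀ w, (2 : ℝ) • T (T (T w)) = (3 : ℝ) • T (T w) - T w) : T.IsPositive := by
  refine (LinearMap.isPositive_iff T).mpr ⟨hT, fun w => ?_⟩
  have hw := congrArg (⟪·, w⟫_ℝ) (h w)
  have hTw := congrArg (⟪·, T w⟫_ℝ) (h w)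
  simp only [inner_sub_left, real_inner_smul_left] at hw hTw
  rw [hT (T (T w)) w, hT (T w) w] at hw
  rw [hT (T (T w)) (T w)] at hTw
  have hsq₁ := real_inner_self_nonneg (x := T w)
  have hsq₂ := real_inner_self_nonneg (x := T w - T (T w))
  rw [inner_sub_left, inner_sub_right, inner_sub_right, real_inner_comm (T (T w)) (T w)] at hsq₂
  linarith

namespace EuclideanJordanAlgebra

variable {E : Type*} [NormedAddCommGroup E] [InnerProductSpace ℝ E] [FiniteDimensional ℝ E]
  (J : EuclideanJordanAlgebra E)

theorem add_mul (x y z : E) : J.mul (x + y) z = J.mul x z + J.mul y z := by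
  rw [J.mul_comm, J.mul_add, J.mul_comm z x, J.mul_comm z y]

theorem smul_mul (c : ℝ) (x y : E) : J.mul (c • x) y = c • J.mul x y := by
  rw [J.mul_comm, J.mul_smul, J.mul_comm]

theorem mul_one (x : E) : J.mul x J.one = x := by
  rw [J.mul_comm, J.one_mul]

theorem mul_sub (x y z : E) : J.mul x (y - z) = J.mul x y - J.mul x z := by
  rw [sub_eq_add_neg, J.mul_add, ← neg_one_smul ℝ z, J.mul_smul, neg_one_smul, ← sub_eq_add_neg]

theorem sub_mul (x y z : E) : J.mul (x - y) z = J.mul x z - J.mul y z := by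
  rw [J.mul_comm, J.mul_sub, J.mul_comm z x, J.mul_comm z y]

/-- `J.mulLeft x` is the operator `L(x) = (x ∘ ·)`. -/
def mulLeft : E →ₗ[ℝ] E →ₗ[ℝ] E :=
  LinearMap.mk₂ ℝ J.mul J.add_mul J.smul_mul J.mul_add J.mul_smul

@[simp] theorem mulLeft_apply (x y : E) : J.mulLeft x y = J.mul x y := rfl

theorem isSymmetric_mulLeft (x : E) : (J.mulLeft x).IsSymmetric := fun y z => by
  simp [J.inner_assoc]

theorem inner_eq_zero_of_mul_eq_zero {x y : E} (h : J.mul x y = 0) : ⟪x, y⟫_ℝ = 0 := by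
  rw [← J.mul_one x, J.inner_assoc, h, inner_zero_right]

theorem jordan_linearized (x z y : E) :
    J.mul z (J.mul (J.mul x x) y) + (2 : ℝ) • J.mul x (J.mul (J.mul x z) y)
      = J.mul (J.mul x x) (J.mul z y) + (2 : ℝ) • J.mul (J.mul x z) (J.mul x y) := by
  have h₁ := J.jordan (x + z) y
  have h₂ := J.jordan (x - z) y
  have h₃ := J.jordan z y
  simp only [J.mul_add, J.add_mul, J.mul_sub, J.sub_mul, J.mul_comm z x] at h₁ h₂
  linear_combination (norm := module) (2 : ℝ)⁻¹ • h₁ - (2 : ℝ)⁻¹ • h₂ - h₃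

noncomputable def npow (x : E) (k : ℕ) : E := (J.mulLeft x ^ k) J.one

theorem npow_zero (x : E) : J.npow x 0 = J.one := rfl

theorem npow_succ (x : E) (k : ℕ) : J.npow x (k + 1) = J.mul x (J.npow x k) := by
  simp [npow, pow_succ']

theorem npow_two (x : E) : J.npow x 2 = J.mul x x := by
  simp [npow_succ, npow_zero, J.mul_one]

theorem mul_self_mul_npow (x : E) (q : ℕ) :
    J.mul (J.mul x x) (J.npow x q) = J.npow x (q + 2) := by
  induction q with
  | zero => rw [npow_zero, J.mul_one, npow_two]
  | succ q ih => rw [J.npow_succ, ← J.jordan, ih, ← J.npow_succ]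

theorem npow_mul_npow (x : E) (p q : ℕ) :
    J.mul (J.npow x p) (J.npow x q) = J.npow x (p + q) := by
  induction p generalizing q with
  | zero => rw [npow_zero, J.one_mul, Nat.zero_add]
  | succ p ihp =>
    induction q with
    | zero => rw [npow_zero, J.mul_one, Nat.add_zero]
    | succ q ihq =>
      have h := J.jordan_linearized x (J.npow x p) (J.npow x q)
      rw [← J.npow_succ, ← J.npow_succ, J.mul_self_mul_npow, ihp, ihq, ihp, ← J.npow_succ,
        J.mul_self_mul_npow, show p + (q + 2) = p + 1 + q + 1 by omega,
        show p + q + 2 = p + 1 + q + 1 by omega, add_left_cancel_iff] at h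
      exact (smul_right_injective E two_ne_zero h).symm

/-- `p(x)`, computed as `p(L(x)) e`. -/
noncomputable def aeval (x : E) (p : ℝ[X]) : E := Polynomial.aeval (J.mulLeft x) p J.one

theorem aeval_X (x : E) : J.aeval x X = x := by
  simp [aeval, J.mul_one]

theorem aeval_monomial (x : E) (n : ℕ) (a : ℝ) : J.aeval x (monomial n a) = a • J.npow x n := by
  simp [aeval, npow, Polynomial.aeval_monomial]

theorem aeval_add (x : E) (p q : ℝ[X]) : J.aeval x (p + q) = J.aeval x p + J.aeval x q := by
  simp [aeval]

theorem aeval_mul (x : E) (p q : ℝ[X]) :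
    J.aeval x (p * q) = J.mul (J.aeval x p) (J.aeval x q) := by
  induction p using Polynomial.induction_on' with
  | add p p' hp hp' => rw [_root_.add_mul, J.aeval_add, hp, hp', J.aeval_add, J.add_mul]
  | monomial n a =>
    induction q using Polynomial.induction_on' with
    | add q q' hq hq' => rw [_root_.mul_add, J.aeval_add, hq, hq', J.aeval_add, J.mul_add]
    | monomial m b =>
      rw [monomial_mul_monomial, J.aeval_monomial, J.aeval_monomial, J.aeval_monomial,
        J.smul_mul, J.mul_smul, J.npow_mul_npow, smul_smul]

noncomputable def mulLeftEigenvalues (x : E) : Finset ℝ :=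
  Finset.univ.image ((J.isSymmetric_mulLeft x).eigenvalues rfl)

theorem aeval_eq_of_eval_eq {x : E} {p q : ℝ[X]}
    (h : ∀ μ ∈ J.mulLeftEigenvalues x, p.eval μ = q.eval μ) : J.aeval x p = J.aeval x q := by
  have hpq : Polynomial.aeval (J.mulLeft x) (p - q) = 0 :=
    (J.isSymmetric_mulLeft x).aeval_eq_zero_of_eval_eigenvalues fun i => by
      rw [eval_sub, h _ (Finset.mem_image_of_mem _ (Finset.mem_univ i)), sub_self]
  rw [← sub_eq_zero, aeval, aeval, ← LinearMap.sub_apply, ← map_sub, hpq, LinearMap.zero_apply]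

theorem aeval_eq_sum_lagrange (x : E) (p : ℝ[X]) :
    J.aeval x p = ∑ μ ∈ J.mulLeftEigenvalues x,
      p.eval μ • J.aeval x (Lagrange.basis (J.mulLeftEigenvalues x) id μ) := by
  set s := J.mulLeftEigenvalues x
  have hinterp : J.aeval x p = J.aeval x (Lagrange.interpolate s id fun μ => p.eval μ) :=
    J.aeval_eq_of_eval_eq fun μ hμ =>
      (Lagrange.eval_interpolate_at_node (v := id) (fun μ => p.eval μ) (Set.injOn_id _) hμ).symm
  rw [hinterp, Lagrange.interpolate_apply, aeval, map_sum, LinearMap.sum_apply]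
  refine Finset.sum_congr rfl fun μ _ => ?_
  rw [← smul_eq_C_mul, map_smul, LinearMap.smul_apply, aeval]

theorem isIdempotent_aeval_lagrange_basis {x : E} {μ : ℝ} (hμ : μ ∈ J.mulLeftEigenvalues x) :
    J.IsIdempotent (J.aeval x (Lagrange.basis (J.mulLeftEigenvalues x) id μ)) := by
  rw [IsIdempotent, ← aeval_mul]
  refine J.aeval_eq_of_eval_eq fun ν hν => ?_
  rw [eval_mul]
  by_cases hμν : μ = ν
  · subst hμν
    have h₁ : (Lagrange.basis _ id μ).eval μ = 1 := Lagrange.eval_basis_self (Set.injOn_id _) hμ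
    rw [h₁, _root_.mul_one]
  · have h₀ : (Lagrange.basis _ id μ).eval ν = 0 := Lagrange.eval_basis_of_ne (v := id) hμν hν
    rw [h₀, mul_zero]

theorem two_smul_mul_mul_mul_of_isIdempotent {c : E} (hc : J.IsIdempotent c) (w : E) :
    (2 : ℝ) • J.mul c (J.mul c (J.mul c w)) = (3 : ℝ) • J.mul c (J.mul c w) - J.mul c w := by
  have h := J.jordan_linearized c w c
  rw [hc, hc, J.mul_comm w c, J.mul_comm (J.mul c w) c] at h
  linear_combination (norm := module) h

theorem isPositive_mulLeft_of_isIdempotent {c : E} (hc : J.IsIdempotent c) :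
    (J.mulLeft c).IsPositive :=
  (J.isSymmetric_mulLeft c).isPositive_of_two_smul_cube (J.two_smul_mul_mul_mul_of_isIdempotent hc)

theorem isPositive_mulLeft_mul_self (x : E) : (J.mulLeft (J.mul x x)).IsPositive := by
  rw [← J.aeval_X x, ← J.aeval_mul, J.aeval_eq_sum_lagrange, map_sum]
  refine LinearMap.isPositive_sum _ fun μ hμ => ?_
  rw [map_smul]
  have hc := J.isIdempotent_aeval_lagrange_basis hμ
  exact (J.isPositive_mulLeft_of_isIdempotent hc).smul_of_nonneg (by simpa using mul_self_nonneg μ)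

theorem isPositive_mulLeft_of_mem_coneOfSquares {x : E} (hx : x ∈ J.coneOfSquares) :
    (J.mulLeft x).IsPositive := by
  obtain ⟨z, rfl⟩ := hx
  exact J.isPositive_mulLeft_mul_self z

theorem mul_eq_zero_of_inner_eq_zero {x y : E} (hx : (J.mulLeft x).IsPositive)
    (hy : y ∈ J.coneOfSquares) (h : ⟪x, y⟫_ℝ = 0) : J.mul x y = 0 := by
  obtain ⟨v, rfl⟩ := hy
  have hxv : J.mul x v = 0 :=
    hx.apply_eq_zero_of_inner_eq_zero (by rw [mulLeft_apply, J.mul_comm, J.inner_assoc, h])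
  refine hx.apply_eq_zero_of_inner_eq_zero ?_
  rw [mulLeft_apply, J.mul_comm, J.inner_assoc, ← J.jordan, ← J.inner_assoc, J.mul_comm v x,
    hxv, inner_zero_left]

end EuclideanJordanAlgebra

/-- In a Euclidean Jordan algebra, for `x, y` in the cone of squares,
`x ∘ y = 0` iff `⟪x, y⟫ = 0`. -/
theorem caratheodory_stmt17 {E : Type*} [NormedAddCommGroup E]
    [InnerProductSpace ℝ E] [FiniteDimensional ℝ E] (J : EuclideanJordanAlgebra E)
    (x y : E) (hx : x ∈ J.coneOfSquares) (hy : y ∈ J.coneOfSquares) :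
    J.mul x y = 0 ↔ (inner ℝ x y : ℝ) = 0 :=
  ⟨J.inner_eq_zero_of_mul_eq_zero,
    J.mul_eq_zero_of_inner_eq_zero (J.isPositive_mulLeft_of_mem_coneOfSquares hx) hy⟩
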